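/- arXiv:2008.13030 — 4 statements merged into one kernel-verified Lean document; each statement's English description precedes it below -/
import Mathlib

section
/- For q ∈ [1,2], the space L_q(μ) of a measure space satisfies ρ(L_q, u) ≤ u^q / q for all u ∈ (0,1], where ρ is the modulus of smoothness. -/
/-!
For `q ≤ 2` the map `t ↦ t ^ (q / 2)` is concave and subadditive on `[0, ∞)`; applied to the
parallelogram law `‖x + y‖² + ‖x - y‖² = 2 (‖x‖² + ‖y‖²)` it gives the Clarkson-type inequality
`‖x + y‖^q + ‖x - y‖^q ≤ 2 (‖x‖^q + ‖y‖^q)`, first pointwise in `ℝ` and then, by integrating,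
in `L_q`. For `‖x‖ = 1`, `‖y‖ = u` this bounds the `q`-mean of `‖x ± u y‖` by `(1 + u^q)^(1/q)`;
convexity of `t ↦ t ^ q` and Bernoulli's inequality `1 + u^q ≤ (1 + u^q / q)^q` turn it into
the bound `1 + u^q / q` on their arithmetic mean.
-/

open MeasureTheory

/-- The modulus of smoothness `ρ(X, u)` of a normed space `X`. -/
noncomputable def modSmooth (X : Type*) [NormedAddCommGroup X] [NormedSpace ℝ X] (u : ℝ) : ℝ :=
  sSup {r : ℝ | ∃ x y : X, ‖x‖ = 1 ∧ ‖y‖ = 1 ∧ r = (‖x + u • y‖ + ‖x - u • y‖) / 2 - 1}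

open scoped ENNReal

lemma Real.sq_rpow_div_two {x : ℝ} (hx : 0 ≤ x) (q : ℝ) : (x ^ 2) ^ (q / 2) = x ^ q := by
  rw [← Real.rpow_natCast, ← Real.rpow_mul hx, Nat.cast_ofNat, mul_div_cancel₀ q two_ne_zero]

lemma Real.rpow_add_rpow_le_of_sq_add_sq_eq {s t a b q : ℝ} (hs : 0 ≤ s) (ht : 0 ≤ t)
    (ha : 0 ≤ a) (hb : 0 ≤ b) (hq0 : 0 ≤ q) (hq2 : q ≤ 2)
    (hst : s ^ 2 + t ^ 2 = 2 * (a ^ 2 + b ^ 2)) :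
    s ^ q + t ^ q ≤ 2 * (a ^ q + b ^ q) := by
  have hconc := (Real.concaveOn_rpow (p := q / 2) (by positivity) (by linarith)).2
    (Set.mem_Ici.2 (sq_nonneg s)) (Set.mem_Ici.2 (sq_nonneg t))
    (by norm_num : (0 : ℝ) ≤ 1 / 2) (by norm_num : (0 : ℝ) ≤ 1 / 2) (by norm_num)
  simp only [smul_eq_mul, Real.sq_rpow_div_two hs, Real.sq_rpow_div_two ht] at hconc
  have hsub := Real.rpow_add_le_add_rpow (p := q / 2) (sq_nonneg a) (sq_nonneg b)
    (by positivity) (by linarith)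
  rw [Real.sq_rpow_div_two ha, Real.sq_rpow_div_two hb] at hsub
  calc s ^ q + t ^ q ≤ 2 * (1 / 2 * s ^ 2 + 1 / 2 * t ^ 2) ^ (q / 2) := by linarith
    _ = 2 * (a ^ 2 + b ^ 2) ^ (q / 2) := by rw [← mul_add, hst, ← mul_assoc]; norm_num
    _ ≤ 2 * (a ^ q + b ^ q) := by gcongr

lemma norm_add_rpow_add_norm_sub_rpow_le {E : Type*} [NormedAddCommGroup E]
    [InnerProductSpace ℝ E] {q : ℝ} (hq0 : 0 ≤ q) (hq2 : q ≤ 2) (x y : E) :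
    ‖x + y‖ ^ q + ‖x - y‖ ^ q ≤ 2 * (‖x‖ ^ q + ‖y‖ ^ q) :=
  Real.rpow_add_rpow_le_of_sq_add_sq_eq (norm_nonneg _) (norm_nonneg _) (norm_nonneg _)
    (norm_nonneg _) hq0 hq2 (parallelogram_law_with_norm ℝ x y)

namespace MeasureTheory.Lp

variable {α E : Type*} [MeasurableSpace α] {μ : Measure α} [NormedAddCommGroup E]
  {p : ℝ≥0∞}

lemma norm_rpow_toReal_eq_integral (hp0 : p ≠ 0) (hp : p ≠ ∞) (f : Lp E p μ) :
    ‖f‖ ^ p.toReal = ∫ x, ‖f x‖ ^ p.toReal ∂μ := by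
  rw [norm_def, toReal_eLpNorm (Lp.aestronglyMeasurable f),
    lpNorm_eq_integral_norm_rpow_toReal hp0 hp (Lp.aestronglyMeasurable f),
    ← Real.rpow_mul (integral_nonneg fun x => by positivity),
    inv_mul_cancel₀ (ENNReal.toReal_pos hp0 hp).ne', Real.rpow_one]

lemma norm_add_rpow_add_norm_sub_rpow_le [InnerProductSpace ℝ E] (hp0 : p ≠ 0) (hp : p ≠ ∞)
    (hp2 : p.toReal ≤ 2) (f g : Lp E p μ) :
    ‖f + g‖ ^ p.toReal + ‖f - g‖ ^ p.toReal ≤ 2 * (‖f‖ ^ p.toReal + ‖g‖ ^ p.toReal) := by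
  have hint (h : Lp E p μ) : Integrable (fun x => ‖h x‖ ^ p.toReal) μ :=
    (Lp.memLp h).integrable_norm_rpow hp0 hp
  simp only [norm_rpow_toReal_eq_integral hp0 hp]
  rw [← integral_add (hint _) (hint _), ← integral_add (hint _) (hint _),
    ← integral_const_mul]
  refine integral_mono_ae ((hint _).add (hint _)) (((hint _).add (hint _)).const_mul 2) ?_
  filter_upwards [Lp.coeFn_add f g, Lp.coeFn_sub f g] with x hadd hsub
  simpa only [hadd, hsub, Pi.add_apply, Pi.sub_apply] using
    _root_.norm_add_rpow_add_norm_sub_rpow_le ENNReal.toReal_nonneg hp2 (f x) (g x)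

end MeasureTheory.Lp

lemma add_div_two_sub_one_le_of_rpow_add_rpow_le {q v N₁ N₂ : ℝ} (hq : 1 ≤ q) (hv : 0 ≤ v)
    (hN₁ : 0 ≤ N₁) (hN₂ : 0 ≤ N₂) (h : N₁ ^ q + N₂ ^ q ≤ 2 * (1 + v)) :
    (N₁ + N₂) / 2 - 1 ≤ v / q := by
  have hq0 : 0 < q := by linarith
  have hconv := (convexOn_rpow hq).2 (Set.mem_Ici.2 hN₁) (Set.mem_Ici.2 hN₂)
    (by norm_num : (0 : ℝ) ≤ 1 / 2) (by norm_num : (0 : ℝ) ≤ 1 / 2) (by norm_num)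
  simp only [smul_eq_mul] at hconv
  have hbern := one_add_mul_self_le_rpow_one_add (s := v / q)
    (by linarith [div_nonneg hv hq0.le]) hq
  rw [mul_div_cancel₀ _ hq0.ne'] at hbern
  have hpow : ((N₁ + N₂) / 2) ^ q ≤ (1 + v / q) ^ q := by
    calc ((N₁ + N₂) / 2) ^ q = (1 / 2 * N₁ + 1 / 2 * N₂) ^ q := by ring_nf
      _ ≤ (1 + v / q) ^ q := by linarith
  have := (Real.rpow_le_rpow_iff (by positivity) (by positivity) hq0).1 hpow
  linarith

lemma modSmooth_le_of_norm_add_rpow_add_norm_sub_rpow_le {X : Type*} [NormedAddCommGroup X]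
    [NormedSpace ℝ X] {q u : ℝ} (hq : 1 ≤ q) (hu : 0 ≤ u)
    (hX : ∀ x y : X, ‖x + y‖ ^ q + ‖x - y‖ ^ q ≤ 2 * (‖x‖ ^ q + ‖y‖ ^ q)) :
    modSmooth X u ≤ u ^ q / q := by
  refine Real.sSup_le ?_ (by positivity)
  rintro r ⟨x, y, hx, hy, rfl⟩
  have hxy := hX x (u • y)
  rw [hx, norm_smul, hy, Real.norm_of_nonneg hu, mul_one, Real.one_rpow] at hxy
  exact add_div_two_sub_one_le_of_rpow_add_rpow_le hq (by positivity)
    (norm_nonneg _) (norm_nonneg _) hxy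

theorem stmt5_general (q : ℝ) (hq1 : 1 ≤ q) (hq2 : q ≤ 2)
    (Ω : Type*) [MeasurableSpace Ω] (μ : Measure Ω)
    [Fact (1 ≤ ENNReal.ofReal q)]
    (u : ℝ) (hu0 : 0 < u) :
    modSmooth (Lp ℝ (ENNReal.ofReal q) μ) u ≤ u ^ q / q := by
  have hq0 : 0 < q := by linarith
  have hpq : (ENNReal.ofReal q).toReal = q := ENNReal.toReal_ofReal hq0.le
  refine modSmooth_le_of_norm_add_rpow_add_norm_sub_rpow_le hq1 hu0.le fun x y => ?_
  simpa only [hpq] using Lp.norm_add_rpow_add_norm_sub_rpow_le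
    (ENNReal.ofReal_pos.2 hq0).ne' ENNReal.ofReal_ne_top (hpq.le.trans hq2) x y

/-- For `q ∈ [1,2]`, the space `L_q(μ)` satisfies `ρ(L_q, u) ≤ u^q / q`
for all `u ∈ (0,1]`. -/
theorem stmt5 (q : ℝ) (hq1 : 1 ≤ q) (hq2 : q ≤ 2)
    (Ω : Type*) [MeasurableSpace Ω] (μ : Measure Ω)
    [Fact (1 ≤ ENNReal.ofReal q)]
    (u : ℝ) (hu0 : 0 < u) (hu1 : u ≤ 1) :
    modSmooth (Lp ℝ (ENNReal.ofReal q) μ) u ≤ u ^ q / q :=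
  stmt5_general q hq1 hq2 Ω μ u hu0
end

section
/- Let X be a Banach space that is q-smooth, i.e. ρ(X,u) ≤ γ u^q with 1 < q ≤ 2, and let D_n be a normalized system (||g_j|| = 1) of n elements in X. Then the best m-term approximation of the octahedron A_1(D_n) = { Σ c_j g_j : Σ|c_j| ≤ 1 } satisfies σ_m(A_1(D_n), D_n)_X ≤ C(q,γ) m^{1/q - 1} for all m ≥ 1, where σ_m(f,D_n)_X = inf over choices of m indices Λ and coefficients of ||f - Σ_{j∈Λ} c_j g_j||, and σ_m over a class is the supremum over its elements. -/
open scoped BigOperators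

/-- Best `m`-term approximation of `f` with respect to the system `g`. -/
noncomputable def sigmaM {X : Type*} [NormedAddCommGroup X] [NormedSpace ℝ X] {n : ℕ}
    (g : Fin n → X) (m : ℕ) (f : X) : ℝ :=
  sInf {r : ℝ | ∃ (Λ : Finset (Fin n)) (c : Fin n → ℝ), Λ.card ≤ m ∧
    r = ‖f - ∑ j ∈ Λ, c j • g j‖}

/-!
Relaxed greedy approximation. Put `G₀ = 0` and `G_{k+1} = (1 - θ_k) G_k + θ_k (±g_j)`, where
`±g_j` is chosen so that a norming functional `F` of `f - G_k` satisfies `F f ≤ F (±g_j)`; this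
is possible because `f` lies in the absolutely convex hull of the `g_j`. Then `F` is nonpositive
on `θ_k (f - (±g_j))`, so the smoothness inequality `‖x + y‖ + ‖x - y‖ ≤ 2‖x‖ + 2γ‖y‖^q‖x‖^(1-q)`
gives `a_{k+1} ≤ (1 - θ_k) a_k + 4^q γ θ_k^q a_k^(1-q)` for `a_k = ‖f - G_k‖`. With
`θ_k = κ a_k^p`, `p` the conjugate exponent of `q` and `κ` small, this is
`a_{k+1} ≤ (1 - θ_k / 2) a_k`, and Bernoulli's inequality turns it into
`a_{k+1}^(-p) ≥ a_k^(-p) + p κ / 2`. Hence `a_m ≲ m^(-1/p) = m^(1/q - 1)`.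
-/

open Real

theorem exists_pos_le_half_mul_rpow_le_one {r : ℝ} (hr : 0 < r) (K : ℝ) :
    ∃ κ : ℝ, 0 < κ ∧ κ ≤ 1 / 2 ∧ K * κ ^ r ≤ 1 := by
  have hlim : Filter.Tendsto (fun κ : ℝ ↦ K * κ ^ r) (nhdsWithin 0 (Set.Ioi 0)) (nhds 0) := by
    have := tendsto_nhdsWithin_of_tendsto_nhds (s := Set.Ioi 0)
      ((continuousAt_rpow_const 0 r (.inr hr.le)).tendsto.const_mul K)
    rwa [zero_rpow hr.ne', mul_zero] at this
  obtain ⟨κ, hκK, hκ⟩ := ((hlim.eventually (gt_mem_nhds one_pos)).and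
    (Ioc_mem_nhdsGT (by norm_num : (0 : ℝ) < 1 / 2))).exists
  exact ⟨κ, hκ.1, hκ.2, hκK.le⟩

theorem rpow_mul_one_add_le {p t a b : ℝ} (hp : 1 ≤ p) (ht₀ : 0 ≤ t) (ht₁ : t ≤ 1) (ha : 0 ≤ a)
    (hb₀ : 0 ≤ b) (hb : b ≤ (1 - t) * a) : b ^ p * (1 + p * t) ≤ a ^ p := by
  have hp₀ : 0 ≤ p := by linarith
  calc b ^ p * (1 + p * t) ≤ ((1 - t) * a) ^ p * (1 + t) ^ p := by
        gcongr
        exact one_add_mul_self_le_rpow_one_add (by linarith) hp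
    _ = (1 - t ^ 2) ^ p * a ^ p := by
        rw [mul_rpow (by linarith) ha, mul_right_comm, ← mul_rpow (by linarith) (by linarith)]
        ring_nf
    _ ≤ a ^ p := by
        have : (1 - t ^ 2) ^ p ≤ 1 := rpow_le_one (by nlinarith) (by nlinarith) hp₀
        nlinarith [rpow_nonneg ha p]

theorem le_rpow_neg_inv_of_mul_rpow_le_one {p K a : ℝ} (hp : 0 < p) (hK : 0 < K) (ha : 0 ≤ a)
    (h : K * a ^ p ≤ 1) : a ≤ K ^ (-p⁻¹) := by
  rw [rpow_neg hK.le, ← inv_rpow hK.le, ← rpow_rpow_inv ha hp.ne']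
  gcongr
  rwa [← one_div, le_div_iff₀ hK, mul_comm]

theorem four_rpow_mul_rpow_le {p q Γ κ a : ℝ} (hpq : q.HolderConjugate p) (hκ : 0 < κ)
    (hκΓ : 2 * 4 ^ q * Γ * κ ^ (q - 1) ≤ 1) (ha : 0 < a) :
    4 ^ q * Γ * (κ * a ^ p) ^ q * a ^ (1 - q) ≤ κ * a ^ p * a / 2 := by
  have hθ : (κ * a ^ p) ^ q = κ ^ (q - 1) * a ^ q * (κ * a ^ p) := by
    rw [mul_rpow hκ.le (by positivity), ← rpow_mul ha.le, mul_comm p, hpq.mul_eq_add,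
      rpow_add ha, rpow_sub_one hκ.ne']
    field_simp
  have ha' : a ^ q * a ^ (1 - q) = a := by
    rw [← rpow_add ha, add_sub_cancel, rpow_one]
  calc 4 ^ q * Γ * (κ * a ^ p) ^ q * a ^ (1 - q)
      = 4 ^ q * Γ * κ ^ (q - 1) * (κ * a ^ p * (a ^ q * a ^ (1 - q))) := by rw [hθ]; ring
    _ ≤ 1 / 2 * (κ * a ^ p * a) := by
        rw [ha']
        gcongr
        linarith
    _ = κ * a ^ p * a / 2 := by ring

section Smoothness

variable {X : Type*} [NormedAddCommGroup X] [NormedSpace ℝ X]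

theorem le_modSmooth {x y : X} (hx : ‖x‖ = 1) (hy : ‖y‖ = 1) (u : ℝ) :
    (‖x + u • y‖ + ‖x - u • y‖) / 2 - 1 ≤ modSmooth X u := by
  refine le_csSup ⟨|u|, ?_⟩ ⟨x, y, hx, hy, rfl⟩
  rintro r ⟨x, y, hx, hy, rfl⟩
  have h₁ := norm_add_le x (u • y)
  have h₂ := norm_sub_le x (u • y)
  rw [norm_smul, hx, hy, Real.norm_eq_abs, mul_one] at h₁ h₂
  linarith

theorem norm_add_add_norm_sub_le {q γ : ℝ} (hq : 0 < q)
    (hρ : ∀ u, 0 < u → modSmooth X u ≤ γ * u ^ q) {x : X} (hx : x ≠ 0) (y : X) :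
    ‖x + y‖ + ‖x - y‖ ≤ 2 * ‖x‖ + 2 * γ * ‖y‖ ^ q * ‖x‖ ^ (1 - q) := by
  rcases eq_or_ne y 0 with rfl | hy
  · simp [zero_rpow hq.ne', two_mul]
  have hx₀ := norm_pos_iff.2 hx
  have hy₀ := norm_pos_iff.2 hy
  set u := ‖y‖ / ‖x‖
  have hscale : ∀ s : ℝ, x + s • y = ‖x‖ • (‖x‖⁻¹ • x + (s * u) • ‖y‖⁻¹ • y) := by
    intro s
    rw [smul_add, smul_inv_smul₀ hx₀.ne', smul_smul, smul_smul]
    congr 2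
    simp only [u]
    field_simp
  have hx₁ : ‖‖x‖⁻¹ • x‖ = 1 := norm_smul_inv_norm hx
  have hy₁ : ‖‖y‖⁻¹ • y‖ = 1 := norm_smul_inv_norm hy
  have hmod := (le_modSmooth hx₁ hy₁ u).trans (hρ u (by positivity))
  have key : ‖x + y‖ + ‖x - y‖ ≤ ‖x‖ * (2 + 2 * γ * u ^ q) := by
    have h₁ := hscale 1
    have h₂ := hscale (-1)
    rw [one_smul, one_mul] at h₁
    rw [neg_one_smul, ← sub_eq_add_neg, neg_one_mul, neg_smul, ← sub_eq_add_neg] at h₂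
    rw [h₁, h₂, norm_smul, norm_smul, norm_norm, ← mul_add]
    exact mul_le_mul_of_nonneg_left (by linarith) hx₀.le
  have hu : ‖x‖ * u ^ q = ‖y‖ ^ q * ‖x‖ ^ (1 - q) := by
    rw [div_rpow hy₀.le hx₀.le, rpow_sub hx₀, rpow_one]
    ring
  linear_combination key + 2 * γ * hu

theorem norm_add_le_of_dual_nonpos {q γ : ℝ} (hq : 0 < q)
    (hρ : ∀ u, 0 < u → modSmooth X u ≤ γ * u ^ q) {x y : X} (hx : x ≠ 0) {F : StrongDual ℝ X}
    (hF : ‖F‖ ≤ 1) (hFx : F x = ‖x‖) (hFy : F y ≤ 0) :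
    ‖x + y‖ ≤ ‖x‖ + 2 * γ * ‖y‖ ^ q * ‖x‖ ^ (1 - q) := by
  have hxy : ‖x‖ ≤ ‖x - y‖ :=
    calc ‖x‖ ≤ F (x - y) := by rw [map_sub]; linarith
      _ ≤ ‖F (x - y)‖ := le_abs_self _
      _ ≤ 1 * ‖x - y‖ := F.le_of_opNorm_le hF _
      _ = ‖x - y‖ := one_mul _
  linarith [norm_add_add_norm_sub_le hq hρ hx y]

end Smoothness

section Greedy

variable {X ι : Type*} [NormedAddCommGroup X] [NormedSpace ℝ X] [Fintype ι]

theorem norm_sum_smul_le_sum_abs {g : ι → X} (hg : ∀ j, ‖g j‖ ≤ 1) (c : ι → ℝ) :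
    ‖∑ j, c j • g j‖ ≤ ∑ j, |c j| :=
  (norm_sum_le _ _).trans <| Finset.sum_le_sum fun j _ ↦ by
    simpa [norm_smul] using mul_le_of_le_one_right (abs_nonneg (c j)) (hg j)

theorem exists_apply_sum_smul_le [Nonempty ι] (F : StrongDual ℝ X) (g : ι → X) {c : ι → ℝ}
    (hc : ∑ j, |c j| ≤ 1) : ∃ j, ∃ b : ℝ, |b| = 1 ∧ F (∑ j, c j • g j) ≤ F (b • g j) := by
  obtain ⟨j, -, hj⟩ := Finset.univ.exists_max_image (fun j ↦ |F (g j)|) Finset.univ_nonempty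
  have hsum : F (∑ j, c j • g j) ≤ |F (g j)| :=
    calc F (∑ j, c j • g j) = ∑ i, c i * F (g i) := by simp
      _ ≤ ∑ i, |c i| * |F (g j)| := Finset.sum_le_sum fun i hi ↦
          (le_abs_self _).trans (abs_mul _ _).le |>.trans
            (mul_le_mul_of_nonneg_left (hj i hi) (abs_nonneg _))
      _ = (∑ i, |c i|) * |F (g j)| := (Finset.sum_mul _ _ _).symm
      _ ≤ |F (g j)| := mul_le_of_le_one_left (abs_nonneg _) hc
  rcases le_total 0 (F (g j)) with hFj | hFj
  · exact ⟨j, 1, abs_one, by simpa [abs_of_nonneg hFj] using hsum⟩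
  · exact ⟨j, -1, by simp, by simpa [abs_of_nonpos hFj] using hsum⟩

theorem exists_norm_sub_smul_add_smul_le [Nonempty ι] {q Γ : ℝ} (hq : 1 < q) (hΓ : 0 ≤ Γ)
    (hρ : ∀ u, 0 < u → modSmooth X u ≤ Γ * u ^ q) {g : ι → X} (hg : ∀ j, ‖g j‖ ≤ 1)
    {c : ι → ℝ} (hc : ∑ j, |c j| ≤ 1) {f h : X} (hf : f = ∑ j, c j • g j) (hfh : f ≠ h)
    {θ : ℝ} (hθ₀ : 0 ≤ θ) (hθ : θ ≤ 1 / 2) :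
    ∃ j, ∃ b : ℝ, ‖f - ((1 - θ) • h + b • g j)‖ ≤
      (1 - θ) * ‖f - h‖ + 4 ^ q * Γ * θ ^ q * ‖f - h‖ ^ (1 - q) := by
  obtain ⟨F, hF, hFfh⟩ := exists_dual_vector ℝ (f - h) (norm_ne_zero_iff.2 (sub_ne_zero.2 hfh))
  obtain ⟨j, b, hb, hFb⟩ := exists_apply_sum_smul_le F g hc
  rw [← hf] at hFb
  refine ⟨j, θ * b, ?_⟩
  set a := ‖f - h‖
  have ha : 0 < a := norm_pos_iff.2 (sub_ne_zero.2 hfh)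
  have hx : ‖(1 - θ) • (f - h)‖ = (1 - θ) * a := by
    rw [norm_smul, Real.norm_of_nonneg (by linarith)]
  have hy : ‖θ • (f - b • g j)‖ ≤ 2 * θ := by
    have hf₁ : ‖f‖ ≤ 1 := hf ▸ (norm_sum_smul_le_sum_abs hg c).trans hc
    have hbg : ‖b • g j‖ ≤ 1 := by rw [norm_smul, Real.norm_eq_abs, hb, one_mul]; exact hg j
    rw [norm_smul, Real.norm_of_nonneg hθ₀, mul_comm]
    gcongr
    linarith [norm_sub_le f (b • g j)]
  have hsplit : f - ((1 - θ) • h + (θ * b) • g j) = (1 - θ) • (f - h) + θ • (f - b • g j) := by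
    module
  have hFx : F ((1 - θ) • (f - h)) = ‖(1 - θ) • (f - h)‖ := by
    rw [hx, map_smul, hFfh, smul_eq_mul]
    rfl
  have hFy : F (θ • (f - b • g j)) ≤ 0 := by
    rw [map_smul, map_sub, smul_eq_mul]
    exact mul_nonpos_of_nonneg_of_nonpos hθ₀ (by linarith)
  have hx₀ : (1 - θ) • (f - h) ≠ 0 := by
    rw [← norm_pos_iff, hx]; exact mul_pos (by linarith) ha
  have hpow : (2 * θ) ^ q * (a / 2) ^ (1 - q) * 2 = 4 ^ q * θ ^ q * a ^ (1 - q) := by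
    rw [mul_rpow zero_le_two hθ₀, div_rpow ha.le zero_le_two, rpow_sub zero_lt_two, rpow_one,
      show (4 : ℝ) = 2 * 2 by norm_num, mul_rpow zero_le_two zero_le_two]
    field_simp
  rw [hsplit]
  calc _ ≤ ‖(1 - θ) • (f - h)‖ +
        2 * Γ * ‖θ • (f - b • g j)‖ ^ q * ‖(1 - θ) • (f - h)‖ ^ (1 - q) :=
        norm_add_le_of_dual_nonpos (by linarith) hρ hx₀ hF.le hFx hFy
    _ ≤ (1 - θ) * a + 2 * Γ * (2 * θ) ^ q * (a / 2) ^ (1 - q) := by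
        have hx' : ((1 - θ) * a) ^ (1 - q) ≤ (a / 2) ^ (1 - q) :=
          rpow_le_rpow_of_nonpos (by positivity) (by nlinarith) (by linarith)
        rw [hx]
        gcongr
        exact rpow_nonneg (by nlinarith) _
    _ = (1 - θ) * a + 4 ^ q * Γ * θ ^ q * a ^ (1 - q) := by
        linear_combination Γ * hpow

end Greedy

section Approximation

variable {X : Type*} [NormedAddCommGroup X] [NormedSpace ℝ X]

theorem sigmaM_le_norm_sub {n m : ℕ} {g : Fin n → X} {Λ : Finset (Fin n)} (hΛ : Λ.card ≤ m)
    (f : X) {h : X} (hh : h ∈ Submodule.span ℝ (g '' Λ)) : sigmaM g m f ≤ ‖f - h‖ := by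
  obtain ⟨d, rfl⟩ := (Submodule.mem_span_image_finset_iff_exists_fun' ℝ).1 hh
  exact csInf_le ⟨0, by rintro _ ⟨_, _, _, rfl⟩; exact norm_nonneg _⟩ ⟨Λ, d, hΛ, rfl⟩

variable {ι : Type*} [Fintype ι] [DecidableEq ι]

theorem exists_mem_span_rpow_le {p q Γ κ : ℝ} (hpq : q.HolderConjugate p) (hΓ : 0 ≤ Γ)
    (hρ : ∀ u, 0 < u → modSmooth X u ≤ Γ * u ^ q) (hκ : 0 < κ) (hκ_half : κ ≤ 1 / 2)
    (hκΓ : 2 * 4 ^ q * Γ * κ ^ (q - 1) ≤ 1) {g : ι → X} (hg : ∀ j, ‖g j‖ ≤ 1) {c : ι → ℝ}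
    (hc : ∑ j, |c j| ≤ 1) {f : X} (hf : f = ∑ j, c j • g j) (k : ℕ) :
    ∃ Λ : Finset ι, Λ.card ≤ k ∧ ∃ h ∈ Submodule.span ℝ (g '' Λ),
      ‖f - h‖ ≤ 1 ∧ k * (p * κ / 2) * ‖f - h‖ ^ p ≤ 1 := by
  have hp := hpq.symm.lt
  induction k with
  | zero =>
    refine ⟨∅, le_rfl, 0, zero_mem _, ?_, by simp⟩
    simpa [hf] using (norm_sum_smul_le_sum_abs hg c).trans hc
  | succ k ih =>
    obtain ⟨Λ, hΛ, h, hh, ha₁, hpot⟩ := ih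
    set a := ‖f - h‖
    rcases (norm_nonneg (f - h)).eq_or_lt with ha₀ | ha₀
    · refine ⟨Λ, by omega, h, hh, ha₁, ?_⟩
      rw [← ha₀, zero_rpow (by linarith), mul_zero]
      exact zero_le_one
    have hfh : f ≠ h := sub_ne_zero.1 (norm_pos_iff.1 ha₀)
    have : Nonempty ι := by
      by_contra hι
      rw [not_nonempty_iff] at hι
      simp [Subsingleton.elim Λ ∅] at hh
      simp [hf, hh] at hfh
    set θ := κ * a ^ p
    have hθ₀ : 0 ≤ θ := by positivity
    have hθ : θ ≤ 1 / 2 :=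
      (mul_le_of_le_one_right hκ.le (rpow_le_one ha₀.le ha₁ (by linarith))).trans hκ_half
    obtain ⟨j, b, hstep⟩ :=
      exists_norm_sub_smul_add_smul_le hpq.lt hΓ hρ hg hc hf hfh hθ₀ hθ
    have hdecr : ‖f - ((1 - θ) • h + b • g j)‖ ≤ (1 - θ / 2) * a := by
      linarith [four_rpow_mul_rpow_le hpq hκ hκΓ ha₀]
    have hmem : (1 - θ) • h + b • g j ∈ Submodule.span ℝ (g '' ↑(insert j Λ)) :=
      Submodule.add_mem _
        (Submodule.smul_mem _ _ (Submodule.span_mono (by gcongr; simp) hh))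
        (Submodule.smul_mem _ _ (Submodule.subset_span ⟨j, by simp, rfl⟩))
    refine ⟨insert j Λ, (Finset.card_insert_le _ _).trans (by omega), _, hmem, ?_, ?_⟩
    · nlinarith
    · have hpow := rpow_mul_one_add_le hp.le (by positivity) (by linarith) ha₀.le (norm_nonneg _)
        hdecr
      rw [show p * (θ / 2) = p * κ / 2 * a ^ p by ring] at hpow
      have hA := rpow_nonneg ha₀.le p
      have hμ : 0 < p * κ / 2 := by positivity
      refine le_of_mul_le_mul_right (a := 1 + p * κ / 2 * a ^ p) ?_ (by positivity)
      push_cast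
      nlinarith [mul_le_mul_of_nonneg_left hpow (by positivity : (0 : ℝ) ≤ (k + 1) * (p * κ / 2))]

end Approximation

theorem stmt6_general (q γ : ℝ) (hq1 : 1 < q) :
    ∃ C > 0, ∀ (X : Type) [NormedAddCommGroup X] [NormedSpace ℝ X] [CompleteSpace X],
      (∀ u : ℝ, 0 < u → modSmooth X u ≤ γ * u ^ q) →
      ∀ (n : ℕ) (g : Fin n → X), (∀ j, ‖g j‖ = 1) →
      ∀ f : X, (∃ c : Fin n → ℝ, (∑ j, |c j|) ≤ 1 ∧ f = ∑ j, c j • g j) →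
      ∀ m : ℕ, 1 ≤ m → sigmaM g m f ≤ C * (m : ℝ) ^ (1 / q - 1) := by
  have hpq := Real.HolderConjugate.conjExponent hq1
  set p := q.conjExponent
  set Γ := max γ 0
  obtain ⟨κ, hκ, hκ_half, hκΓ⟩ :=
    exists_pos_le_half_mul_rpow_le_one (sub_pos.2 hq1) (2 * 4 ^ q * Γ)
  have hμ : 0 < p * κ / 2 := by have := hpq.symm.pos; positivity
  refine ⟨(p * κ / 2) ^ (-p⁻¹), by positivity, ?_⟩
  rintro X _ _ _ hρ n g hg f ⟨c, hc, hf⟩ m hm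
  have hρΓ : ∀ u, 0 < u → modSmooth X u ≤ Γ * u ^ q := fun u hu ↦
    (hρ u hu).trans (mul_le_mul_of_nonneg_right (le_max_left _ _) (by positivity))
  obtain ⟨Λ, hΛ, h, hh, -, hpot⟩ := exists_mem_span_rpow_le hpq (le_max_right _ _) hρΓ hκ hκ_half
    hκΓ (fun j ↦ (hg j).le) hc hf m
  have hm₀ : (0 : ℝ) < m := by exact_mod_cast hm
  calc sigmaM g m f ≤ ‖f - h‖ := sigmaM_le_norm_sub hΛ f hh
    _ ≤ (p * κ / 2 * m) ^ (-p⁻¹) :=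
        le_rpow_neg_inv_of_mul_rpow_le_one hpq.symm.pos (by positivity) (norm_nonneg _)
          (by linarith)
    _ = (p * κ / 2) ^ (-p⁻¹) * (m : ℝ) ^ (1 / q - 1) := by
        rw [Real.mul_rpow hμ.le hm₀.le, one_div, ← hpq.one_sub_inv, neg_sub]

/-- If `X` is `q`-smooth (`ρ(X,u) ≤ γ u^q`, `1 < q ≤ 2`) and `D_n` is a
normalized system of `n` elements, then `σ_m(A_1(D_n), D_n)_X ≤ C(q,γ) m^{1/q - 1}`
for all `m ≥ 1`. -/
theorem stmt6 (q γ : ℝ) (hq1 : 1 < q) (hq2 : q ≤ 2) (hγ : 0 < γ) :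
    ∃ C > 0, ∀ (X : Type) [NormedAddCommGroup X] [NormedSpace ℝ X] [CompleteSpace X],
      (∀ u : ℝ, 0 < u → modSmooth X u ≤ γ * u ^ q) →
      ∀ (n : ℕ) (g : Fin n → X), (∀ j, ‖g j‖ = 1) →
      ∀ f : X, (∃ c : Fin n → ℝ, (∑ j, |c j|) ≤ 1 ∧ f = ∑ j, c j • g j) →
      ∀ m : ℕ, 1 ≤ m → sigmaM g m f ≤ C * (m : ℝ) ^ (1 / q - 1) :=
  stmt6_general q γ hq1
end

section
/- Let B^n_p denote the unit ball of ℓ^n_p, 2 ≤ p < ∞. Then the entropy numbers of B^n_p in the ℓ^n_∞ norm satisfy ε_k(B^n_p, ℓ^n_∞) ≤ C(p) ( log(2n/k)/k )^{1/p} for k = 1,...,n, where C(p) depends only on p. -/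
/-!
Round every coordinate of `w ∈ B^n_p` towards zero to the grid `δℤ`, where
`δ = (128 L / k)^{1/p}` and `L = log₂(2n/k)`. The rounded point `δ m` is within `δ` of `w`
in `ℓ^n_∞`, and since `|m_i| ≤ |m_i|^p` for integers, `∑ |m_i| ≤ δ^{-p} = k / (128 L)`.
By stars and bars there are at most `C(n + 2B, 2B) ≤ (e (n + 2B) / 2B)^{2B}` integer vectors
with `∑ |m_i| ≤ B`, and for `B ≤ k / (128 L)` this is at most `2^k`.
-/

open Finset

/-- The `k`-th dyadic entropy number of a set `W` in a normed space.
For `W ⊆ (Fin n → ℝ)` with the product (sup) norm this is `ε_k(W, ℓ^n_∞)`. -/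
noncomputable def entropyNum {X : Type*} [NormedAddCommGroup X] (W : Set X) (k : ℕ) : ℝ :=
  sInf {ε : ℝ | 0 < ε ∧ ∃ y : Fin (2 ^ k) → X, ∀ w ∈ W, ∃ j, ‖w - y j‖ ≤ ε}

theorem Equiv.intEquivNat_le_two_mul_natAbs (t : ℤ) : Equiv.intEquivNat t ≤ 2 * t.natAbs := by
  cases t with
  | ofNat n => exact le_rfl
  | negSucc n => simp [Equiv.intEquivNat, Equiv.intEquivNatSumNat]

section Counting

variable {ι : Type*} [Fintype ι] [DecidableEq ι]

theorem card_le_choose_of_sum_le (S : Finset (ι → ℕ)) (D : ℕ)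
    (hS : ∀ f ∈ S, ∑ i, f i ≤ D) : S.card ≤ (Fintype.card ι + D).choose D := by
  let M : (ι → ℕ) → Multiset (Option ι) := fun f =>
    ∑ i, Multiset.replicate (f i) (some i) + Multiset.replicate (D - ∑ i, f i) none
  have count_M (f : ι → ℕ) (j : ι) : (M f).count (some j) = f j := by
    simp [M, Multiset.count_sum', Multiset.count_replicate]
  have card_M (f : ι → ℕ) (hf : ∑ i, f i ≤ D) : Multiset.card (M f) = D := by
    simp only [M, Multiset.card_add, Multiset.card_sum, Multiset.card_replicate]
    omega
  let toSym : S → Sym (Option ι) D := fun f => Sym.mk (M f) (card_M f (hS f f.2))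
  have := Fintype.card_le_of_injective toSym fun f g hfg => by
    ext j
    simpa [toSym, count_M] using
      congrArg (fun s : Sym (Option ι) D => (s : Multiset _).count (some j)) hfg
  simpa [Sym.card_sym_eq_choose] using this

variable (ι) in
noncomputable def latticeBall (B : ℕ) : Finset (ι → ℤ) :=
  {m ∈ Fintype.piFinset fun _ => Icc (-(B : ℤ)) B | ∑ i, (m i).natAbs ≤ B}

theorem mem_latticeBall {B : ℕ} {m : ι → ℤ} :
    m ∈ latticeBall ι B ↔ ∑ i, (m i).natAbs ≤ B := by
  refine ⟨fun h => (mem_filter.1 h).2,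
    fun h => mem_filter.2 ⟨Fintype.mem_piFinset.2 fun i => ?_, h⟩⟩
  have := (single_le_sum (fun j _ => Nat.zero_le _) (mem_univ i)).trans h
  rw [mem_Icc]
  omega

theorem card_latticeBall_le (B : ℕ) :
    (latticeBall ι B).card ≤ (Fintype.card ι + 2 * B).choose (2 * B) := by
  have hinj : Function.Injective fun m : ι → ℤ => Equiv.intEquivNat ∘ m :=
    Equiv.intEquivNat.injective.comp_left
  rw [← card_image_of_injective _ hinj]
  refine card_le_choose_of_sum_le _ _ fun f hf => ?_
  obtain ⟨m, hm, rfl⟩ := mem_image.1 hf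
  calc ∑ i, Equiv.intEquivNat (m i) ≤ ∑ i, 2 * (m i).natAbs :=
        sum_le_sum fun i _ => Equiv.intEquivNat_le_two_mul_natAbs (m i)
    _ = 2 * ∑ i, (m i).natAbs := (mul_sum ..).symm
    _ ≤ 2 * B := Nat.mul_le_mul_left 2 (mem_latticeBall.1 hm)

end Counting

theorem Nat.choose_le_exp_mul_div_pow (N D : ℕ) :
    (N.choose D : ℝ) ≤ (Real.exp 1 * N / D) ^ D := by
  rcases D.eq_zero_or_pos with rfl | hD
  · simp
  have hfac := Real.pow_div_factorial_le_exp D (by positivity) D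
  rw [← Real.exp_one_pow, div_le_iff₀ (by positivity)] at hfac
  calc (N.choose D : ℝ) ≤ N ^ D / D.factorial := Nat.choose_le_pow_div D N
    _ ≤ N ^ D / (D ^ D / Real.exp 1 ^ D) := by
        gcongr; rw [div_le_iff₀ (by positivity)]; linarith
    _ = (Real.exp 1 * N / D) ^ D := by rw [div_pow, mul_pow, div_div_eq_mul_div]; ring

theorem Nat.choose_add_le_two_pow {n k D : ℕ} (hk : 0 < k) (hkn : k ≤ n)
    (hD : D * (64 * Real.logb 2 (2 * n / k)) ≤ k) : (n + D).choose D ≤ 2 ^ k := by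
  rcases D.eq_zero_or_pos with rfl | hD0
  · simp [Nat.one_le_two_pow]
  set L := Real.logb 2 (2 * n / k)
  have hkR : (0 : ℝ) < k := by exact_mod_cast hk
  have hDR : (0 : ℝ) < D := by exact_mod_cast hD0
  have hnk : (k : ℝ) ≤ n := by exact_mod_cast hkn
  have hnR : (0 : ℝ) < n := hkR.trans_le hnk
  have hlog2 : 0 < Real.log 2 := Real.log_pos one_lt_two
  have hL : 1 ≤ L := by
    rw [Real.le_logb_iff_rpow_le one_lt_two (by positivity), Real.rpow_one, le_div_iff₀ hkR]
    linarith
  have hDk : D * 64 ≤ (k : ℝ) := by nlinarith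
  have hlog_split : Real.log (Real.exp 1 * (2 * n) / D) =
      1 + L * Real.log 2 + Real.log 2 + Real.log (k / (2 * D)) := by
    rw [show L * Real.log 2 = Real.log (2 * n / k) from div_mul_cancel₀ _ hlog2.ne',
      Real.log_div (by positivity) hDR.ne', Real.log_div (by positivity) hkR.ne',
      Real.log_div hkR.ne' (by positivity), Real.log_mul (by positivity) (by positivity),
      Real.log_mul (by positivity) (by positivity), Real.log_mul (by positivity) (by positivity),
      Real.log_exp]
    ring
  have hlog_half : Real.log (k / (2 * D)) ≤ k / (2 * D) - 1 :=
    Real.log_le_sub_one_of_pos (by positivity)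
  have hexp : D * Real.log (Real.exp 1 * (2 * n) / D) ≤ k * Real.log 2 := by
    have : (D : ℝ) * (k / (2 * D)) = k / 2 := by field_simp
    have := Real.log_two_gt_d9
    -- by `hlog_half`, the left side is at most `D L log 2 + D log 2 + k/2 ≤ k log 2 / 32 + k/2`
    rw [hlog_split]
    nlinarith
  have hpow : (Real.exp 1 * (2 * n) / D) ^ D ≤ (2 : ℝ) ^ k := by
    rw [← Real.log_le_log_iff (by positivity) (by positivity), Real.log_pow, Real.log_pow]
    exact hexp
  have : ((n + D).choose D : ℝ) ≤ 2 ^ k := by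
    refine (Nat.choose_le_exp_mul_div_pow _ _).trans (le_trans ?_ hpow)
    gcongr
    push_cast; linarith
  exact_mod_cast this

theorem exists_nat_mul_le_lt_add {δ t : ℝ} (hδ : 0 < δ) (ht : 0 ≤ t) :
    ∃ m : ℕ, m * δ ≤ t ∧ t < m * δ + δ := by
  refine ⟨⌊t / δ⌋₊, (le_div_iff₀ hδ).1 (Nat.floor_le (div_nonneg ht hδ.le)), ?_⟩
  have := (div_lt_iff₀ hδ).1 (Nat.lt_floor_add_one (t / δ))
  linarith

theorem exists_int_abs_sub_mul_le {δ : ℝ} (hδ : 0 < δ) (t : ℝ) :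
    ∃ m : ℤ, |t - δ * m| ≤ δ ∧ m.natAbs * δ ≤ |t| := by
  obtain ⟨m, hm, hm'⟩ := exists_nat_mul_le_lt_add hδ (abs_nonneg t)
  rcases le_or_gt 0 t with ht | ht
  · refine ⟨m, ?_, by simpa⟩
    rw [abs_of_nonneg ht] at hm hm'
    rw [abs_le]; push_cast; constructor <;> linarith
  · refine ⟨-m, ?_, by simpa⟩
    rw [abs_of_neg ht] at hm hm'
    rw [abs_le]; push_cast; constructor <;> linarith

theorem exists_int_approx_of_sum_rpow {ι : Type*} [Fintype ι] {p δ : ℝ} (hp : 1 ≤ p)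
    (hδ : 0 < δ) (w : ι → ℝ) :
    ∃ m : ι → ℤ, ‖w - fun i => δ * m i‖ ≤ δ ∧
      (∑ i, ((m i).natAbs : ℝ)) * δ ^ p ≤ ∑ i, |w i| ^ p := by
  choose m hm_near hm_abs using fun i => exists_int_abs_sub_mul_le hδ (w i)
  refine ⟨m, (pi_norm_le_iff_of_nonneg hδ.le).2 hm_near, ?_⟩
  rw [sum_mul]
  refine sum_le_sum fun i _ => ?_
  calc ((m i).natAbs : ℝ) * δ ^ p ≤ ((m i).natAbs : ℝ) ^ p * δ ^ p := by
        gcongr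
        rcases Nat.eq_zero_or_pos (m i).natAbs with h | h
        · simp [h, Real.zero_rpow (by linarith : p ≠ 0)]
        · exact Real.self_le_rpow_of_one_le (by exact_mod_cast h) hp
    _ = ((m i).natAbs * δ) ^ p := (Real.mul_rpow (by positivity) hδ.le).symm
    _ ≤ |w i| ^ p := by gcongr; exact hm_abs i

theorem entropyNum_le_of_cover {X κ : Type*} [NormedAddCommGroup X] [Fintype κ] {W : Set X}
    {k : ℕ} {ε : ℝ} (hε : 0 < ε) (hκ : Fintype.card κ ≤ 2 ^ k) (y : κ → X)
    (hW : ∀ w ∈ W, ∃ j, ‖w - y j‖ ≤ ε) : entropyNum W k ≤ ε := by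
  obtain ⟨e⟩ := Function.Embedding.nonempty_of_card_le (hκ.trans_eq (Fintype.card_fin _).symm)
  refine csInf_le ⟨0, fun δ hδ => hδ.1.le⟩ ⟨hε, Function.extend e y 0, fun w hw => ?_⟩
  obtain ⟨j, hj⟩ := hW w hw
  exact ⟨e j, by rwa [e.injective.extend_apply]⟩

/-- For `2 ≤ p < ∞`, the unit ball `B^n_p` of `ℓ^n_p` satisfies
`ε_k(B^n_p, ℓ^n_∞) ≤ C(p) (log₂(2n/k)/k)^{1/p}` for `k = 1,...,n`. -/
theorem stmt10 (p : ℝ) (hp : 2 ≤ p) :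
    ∃ C > 0, ∀ n k : ℕ, 1 ≤ k → k ≤ n →
      entropyNum {f : Fin n → ℝ | (∑ i, |f i| ^ p) ≤ 1} k
        ≤ C * (Real.logb 2 (2 * n / k) / k) ^ (1 / p) := by
  refine ⟨128 ^ (1 / p), by positivity, fun n k hk hkn => ?_⟩
  set L := Real.logb 2 (2 * n / k)
  have hkR : (0 : ℝ) < k := by exact_mod_cast hk
  have hL : 0 < L := Real.logb_pos one_lt_two <| by
    have : (k : ℝ) ≤ n := by exact_mod_cast hkn
    rw [lt_div_iff₀ hkR]; linarith
  rw [← Real.mul_rpow (by norm_num) (by positivity), ← mul_div_assoc]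
  set δ := (128 * L / k) ^ (1 / p)
  have hδ : 0 < δ := by positivity
  have hδp : δ ^ p = 128 * L / k := by
    simp only [δ, one_div]
    exact Real.rpow_inv_rpow (by positivity) (by linarith)
  set B := ⌊k / (128 * L)⌋₊
  have hB : B * (128 * L) ≤ k := (le_div_iff₀ (by positivity)).1 (Nat.floor_le (by positivity))
  refine entropyNum_le_of_cover hδ ?_ (fun m : latticeBall (Fin n) B => fun i => δ * m.1 i) ?_
  · refine (Fintype.card_coe _).trans_le <| (card_latticeBall_le B).trans ?_
    rw [Fintype.card_fin]
    exact Nat.choose_add_le_two_pow hk hkn (by push_cast; linarith)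
  · intro w hw
    obtain ⟨m, hm_near, hm_sum⟩ := exists_int_approx_of_sum_rpow (p := p) (by linarith) hδ w
    refine ⟨⟨m, mem_latticeBall.2 <| Nat.le_floor ?_⟩, hm_near⟩
    have hsum : (∑ i, ((m i).natAbs : ℝ)) * (128 * L / k) ≤ 1 := hδp ▸ hm_sum.trans hw
    rw [mul_div_assoc', div_le_one hkR] at hsum
    push_cast
    rwa [le_div_iff₀ (by positivity)]
end

section
/- Let X_N be an N-dimensional subspace of C(Ω), 1 ≤ p < ∞, and for x ∈ Ω and f ∈ X_N with ||f||_{L_p(μ)} ≤ 1 one has sup_f |f(x)| = inf{ ||D_N(x,·) - v||_{p'} : v ∈ L_{p'}(μ), v ⊥ X_N }, where D_N is the reproducing kernel of X_N and p' = p/(p-1). -/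
/-!
Every `f ∈ X_N` is reproduced by the kernel, `f x = ∫ D_N(x,·) f dμ`, so for `v ⊥ X_N` Hölder's
inequality gives `|f x| ≤ ‖D_N(x,·) - v‖_{p'} ‖f‖_p`: the supremum is at most the infimum.
Conversely, let `f₀` maximise `f ↦ f x` on the unit ball of `X_N` in `L_p` (a compact set, as
`X_N` is finite-dimensional and `‖·‖_p` is a norm on it) and put `L = f₀ x`. For `p > 1` the
derivative of `t ↦ ‖f₀ + t h‖_p` at the maximum shows that `g = L |f₀|^{p-2} f₀` reproduces
`X_N`, and `‖g‖_{p'} = L`; thus `v = D_N(x,·) - g` is orthogonal to `X_N` and attains the bound.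
For `p = 1` one takes these `g` for exponents `r ↓ 1`: `‖g‖_∞ ≤ L K^{r-1}`, where `K` bounds the
sup norm by the `L_1` norm on `X_N`.
-/

open MeasureTheory Filter Topology
open scoped ENNReal

-- `|z| ^ (p - 1) * sign z`, the derivative of `|z| ^ p / p`.
noncomputable def dualityMap (p z : ℝ) : ℝ := |z| ^ (p - 2) * z

section DualityMap

variable {p : ℝ}

lemma hasDerivAt_abs_rpow_eq_dualityMap (hp : 1 < p) (z : ℝ) :
    HasDerivAt (fun z => |z| ^ p) (p * dualityMap p z) z := by
  simpa [dualityMap, mul_assoc] using hasDerivAt_abs_rpow z hp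

lemma continuous_dualityMap (hp : 1 < p) : Continuous (dualityMap p) := by
  have hderiv : deriv (fun z : ℝ => |z| ^ p) = fun z => p * dualityMap p z :=
    funext fun z => (hasDerivAt_abs_rpow_eq_dualityMap hp z).deriv
  have hcont := ((contDiff_norm_rpow (E := ℝ) hp).continuous_deriv le_rfl).const_mul p⁻¹
  simp only [Real.norm_eq_abs, hderiv, inv_mul_cancel_left₀ (zero_lt_one.trans hp).ne'] at hcont
  exact hcont

lemma abs_dualityMap (hp : 1 < p) (z : ℝ) : |dualityMap p z| = |z| ^ (p - 1) := by
  rw [dualityMap, abs_mul, abs_of_nonneg (by positivity),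
    ← Real.rpow_add_one' (abs_nonneg z) (by linarith)]
  ring_nf

end DualityMap

lemma ENNReal.holderConjugate_div_sub_one {P : ℝ≥0∞} (h1 : 1 ≤ P) (htop : P ≠ ∞) :
    P.HolderConjugate (P / (P - 1)) := by
  rw [ENNReal.holderConjugate_iff, ENNReal.inv_div (.inr htop) (.inr (by positivity)),
    div_eq_mul_inv, ← one_add_mul, add_tsub_cancel_of_le h1,
    ENNReal.mul_inv_cancel (by positivity) htop]

section Holder

variable {Ω : Type*} [MeasurableSpace Ω] {μ : Measure Ω}

lemma eLpNorm_toReal_smul (p : ℝ≥0∞) (c : ℝ) (f : Ω → ℝ) :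
    (eLpNorm (c • f) p μ).toReal = |c| * (eLpNorm f p μ).toReal := by
  rw [eLpNorm_const_smul, ENNReal.toReal_mul, toReal_enorm, Real.norm_eq_abs]

lemma abs_integral_mul_le_eLpNorm_mul_eLpNorm {p q : ℝ≥0∞} [p.HolderConjugate q] {f g : Ω → ℝ}
    (hf : MemLp f p μ) (hg : MemLp g q μ) :
    |∫ y, f y * g y ∂μ| ≤ (eLpNorm f p μ).toReal * (eLpNorm g q μ).toReal := by
  have hfg : Integrable (f * g) μ := hf.integrable_mul hg
  have holder : eLpNorm (f * g) 1 μ ≤ eLpNorm f p μ * eLpNorm g q μ :=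
    eLpNorm_smul_le_mul_eLpNorm (p := p) (q := q) (r := 1) (φ := f) hg.1 hf.1
  calc |∫ y, f y * g y ∂μ| ≤ ∫ y, ‖(f * g) y‖ ∂μ := norm_integral_le_integral_norm (f * g)
    _ = (eLpNorm (f * g) 1 μ).toReal := by
      rw [eLpNorm_one_eq_lintegral_enorm, ← ofReal_integral_norm_eq_lintegral_enorm hfg,
        ENNReal.toReal_ofReal (by positivity)]
    _ ≤ (eLpNorm f p μ * eLpNorm g q μ).toReal :=
      ENNReal.toReal_mono (ENNReal.mul_ne_top hf.eLpNorm_ne_top hg.eLpNorm_ne_top) holder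
    _ = _ := ENNReal.toReal_mul

lemma eLpNorm_comp_dualityMap {p : ℝ} (hp : 1 < p) (f : Ω → ℝ) :
    eLpNorm (fun y => dualityMap p (f y)) (ENNReal.ofReal p / (ENNReal.ofReal p - 1)) μ
      = eLpNorm f (ENNReal.ofReal p) μ ^ (p - 1) := by
  have hexp : ENNReal.ofReal p / (ENNReal.ofReal p - 1) * ENNReal.ofReal (p - 1)
      = ENNReal.ofReal p := by
    rw [← ENNReal.ofReal_one, ← ENNReal.ofReal_sub _ zero_le_one]
    exact ENNReal.div_mul_cancel (ENNReal.ofReal_pos.2 (sub_pos.2 hp)).ne' ENNReal.ofReal_ne_top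
  have hrpow := eLpNorm_norm_rpow f (p := ENNReal.ofReal p / (ENNReal.ofReal p - 1)) (μ := μ)
    (sub_pos.2 hp)
  rw [hexp] at hrpow
  rw [← hrpow]
  refine eLpNorm_congr_norm_ae (Eventually.of_forall fun y => ?_)
  rw [Real.norm_eq_abs (dualityMap p _), abs_dualityMap hp, Real.norm_of_nonneg (by positivity),
    Real.norm_eq_abs]

end Holder

section

variable {Ω : Type*} [TopologicalSpace Ω]

noncomputable def dualExtremal (p : ℝ) (x : Ω) (f₀ : C(Ω, ℝ)) (y : Ω) : ℝ :=
  f₀ x * dualityMap p (f₀ y)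

lemma continuous_dualExtremal {p : ℝ} (hp : 1 < p) (x : Ω) (f₀ : C(Ω, ℝ)) :
    Continuous (dualExtremal p x f₀) :=
  continuous_const.mul ((continuous_dualityMap hp).comp f₀.continuous)

variable [MeasurableSpace Ω] {μ : Measure Ω}

-- `f₀` maximises `f ↦ f x` on the unit ball of `(X, ‖·‖_p)`, the maximality being stated
-- homogeneously.
structure IsPointwiseExtremal (X : Submodule ℝ C(Ω, ℝ)) (μ : Measure Ω) (p : ℝ≥0∞) (x : Ω)
    (f₀ : C(Ω, ℝ)) : Prop where
  mem : f₀ ∈ X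
  eLpNorm_le_one : (eLpNorm f₀ p μ).toReal ≤ 1
  abs_apply_le : ∀ f ∈ X, |f x| ≤ f₀ x * (eLpNorm f p μ).toReal

namespace IsPointwiseExtremal

variable {X : Submodule ℝ C(Ω, ℝ)} {p : ℝ≥0∞} {x : Ω} {f₀ : C(Ω, ℝ)}

lemma apply_nonneg (hf₀ : IsPointwiseExtremal X μ p x f₀) : 0 ≤ f₀ x := by
  have := hf₀.abs_apply_le f₀ hf₀.mem
  nlinarith [abs_nonneg (f₀ x), le_abs_self (f₀ x), neg_abs_le (f₀ x),
    (ENNReal.toReal_nonneg : 0 ≤ (eLpNorm f₀ p μ).toReal), hf₀.eLpNorm_le_one]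

lemma isGreatest (hf₀ : IsPointwiseExtremal X μ p x f₀) :
    IsGreatest {r : ℝ | ∃ f : C(Ω, ℝ), f ∈ X ∧ (eLpNorm f p μ).toReal ≤ 1 ∧ r = |f x|} (f₀ x) :=
  ⟨⟨f₀, hf₀.mem, hf₀.eLpNorm_le_one, (abs_of_nonneg hf₀.apply_nonneg).symm⟩,
    fun _ ⟨f, hf, hf1, hr⟩ => hr ▸ (hf₀.abs_apply_le f hf).trans
      (mul_le_of_le_one_right hf₀.apply_nonneg hf1)⟩

lemma eLpNorm_eq_one (hf₀ : IsPointwiseExtremal X μ p x f₀) (hpos : 0 < f₀ x) :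
    (eLpNorm f₀ p μ).toReal = 1 := by
  have := (le_abs_self _).trans (hf₀.abs_apply_le f₀ hf₀.mem)
  exact le_antisymm hf₀.eLpNorm_le_one (le_of_mul_le_mul_left (by linarith) hpos)

end IsPointwiseExtremal

lemma abs_apply_le_mul_eLpNorm_of_forall_apply_le {X : Submodule ℝ C(Ω, ℝ)} {p : ℝ≥0∞} {x : Ω}
    {f₀ f : C(Ω, ℝ)} (hle : ∀ g ∈ X, (eLpNorm g p μ).toReal ≤ 1 → g x ≤ f₀ x) (hf : f ∈ X)
    (hn : 0 < (eLpNorm f p μ).toReal) : |f x| ≤ f₀ x * (eLpNorm f p μ).toReal := by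
  have hscaled : ∀ g ∈ X, eLpNorm g p μ = eLpNorm f p μ → g x ≤ (eLpNorm f p μ).toReal * f₀ x :=
    fun g hg hgf => by
      have := hle ((eLpNorm f p μ).toReal⁻¹ • g) (X.smul_mem _ hg) (by
        rw [ContinuousMap.coe_smul, eLpNorm_toReal_smul, hgf, abs_of_pos (inv_pos.2 hn),
          inv_mul_cancel₀ hn.ne'])
      rwa [ContinuousMap.smul_apply, smul_eq_mul, inv_mul_le_iff₀ hn] at this
  have hneg := hscaled (-f) (X.neg_mem hf) (by rw [ContinuousMap.coe_neg, eLpNorm_neg])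
  rw [ContinuousMap.neg_apply] at hneg
  rw [abs_le, mul_comm]
  exact ⟨by linarith, hscaled f hf rfl⟩

lemma IsPointwiseExtremal.eLpNorm_dualExtremal_le {X : Submodule ℝ C(Ω, ℝ)} {p : ℝ} {x : Ω}
    {f₀ : C(Ω, ℝ)} (hf₀ : IsPointwiseExtremal X μ (ENNReal.ofReal p) x f₀) (hp : 1 < p) :
    (eLpNorm (dualExtremal p x f₀) (ENNReal.ofReal p / (ENNReal.ofReal p - 1)) μ).toReal
      ≤ f₀ x := by
  change (eLpNorm (f₀ x • fun y => dualityMap p (f₀ y)) _ μ).toReal ≤ _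
  rw [eLpNorm_toReal_smul, eLpNorm_comp_dualityMap hp, ← ENNReal.toReal_rpow,
    abs_of_nonneg hf₀.apply_nonneg]
  exact mul_le_of_le_one_right hf₀.apply_nonneg
    (Real.rpow_le_one ENNReal.toReal_nonneg hf₀.eLpNorm_le_one (by linarith))

-- Its infimum is the `L_q`-distance from `k` to the annihilator of `X`.
def annihilatorDistances (X : Submodule ℝ C(Ω, ℝ)) (μ : Measure Ω) (q : ℝ≥0∞) (k : Ω → ℝ) :
    Set ℝ :=
  {s | ∃ v : Ω → ℝ, MemLp v q μ ∧ (∀ f : C(Ω, ℝ), f ∈ X → ∫ y, v y * f y ∂μ = 0) ∧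
    s = (eLpNorm (fun y => k y - v y) q μ).toReal}

lemma bddBelow_annihilatorDistances (X : Submodule ℝ C(Ω, ℝ)) (q : ℝ≥0∞) (k : Ω → ℝ) :
    BddBelow (annihilatorDistances X μ q k) :=
  ⟨0, by rintro _ ⟨v, -, -, rfl⟩; exact ENNReal.toReal_nonneg⟩

variable [CompactSpace Ω]

lemma eLpNorm_top_dualExtremal_le {p : ℝ} (hp : 1 < p) {x : Ω} {f₀ : C(Ω, ℝ)} (hx : 0 ≤ f₀ x) :
    (eLpNorm (dualExtremal p x f₀) ∞ μ).toReal ≤ f₀ x * ‖f₀‖ ^ (p - 1) := by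
  refine ENNReal.toReal_le_of_le_ofReal (by positivity) ?_
  rw [eLpNorm_exponent_top]
  refine eLpNormEssSup_le_of_ae_bound (Eventually.of_forall fun y => ?_)
  rw [dualExtremal, Real.norm_eq_abs, abs_mul, abs_of_nonneg hx, abs_dualityMap hp]
  gcongr
  simpa using f₀.norm_coe_le_norm y

variable [BorelSpace Ω] [IsFiniteMeasure μ]

lemma Continuous.memLp_of_compactSpace {f : Ω → ℝ} (hf : Continuous f) (q : ℝ≥0∞) :
    MemLp f q μ :=
  ((ContinuousMap.equivBoundedOfCompact Ω ℝ ⟨f, hf⟩).memLp_top).mono_exponent le_top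

lemma Continuous.integrable_of_compactSpace {f : Ω → ℝ} (hf : Continuous f) : Integrable f μ :=
  memLp_one_iff_integrable.1 (hf.memLp_of_compactSpace 1)

lemma ContinuousMap.norm_toLp (p : ℝ≥0∞) [Fact (1 ≤ p)] (f : C(Ω, ℝ)) :
    ‖toLp p μ ℝ f‖ = (eLpNorm f p μ).toReal := by
  rw [Lp.norm_def, eLpNorm_congr_ae (coeFn_toLp μ f)]

lemma eLpNorm_toReal_eq_integral_rpow {p : ℝ} (hp : 0 < p) (f : C(Ω, ℝ)) :
    (eLpNorm f (ENNReal.ofReal p) μ).toReal = (∫ y, |f y| ^ p ∂μ) ^ p⁻¹ := by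
  rw [MemLp.eLpNorm_eq_integral_rpow_norm (by simpa using hp) ENNReal.ofReal_ne_top
    (f.continuous.memLp_of_compactSpace _), ENNReal.toReal_ofReal (by positivity),
    ENNReal.toReal_ofReal hp.le]
  simp only [Real.norm_eq_abs]

lemma eLpNorm_mem_annihilatorDistances {X : Submodule ℝ C(Ω, ℝ)} {x : Ω} {k : Ω → ℝ}
    (q : ℝ≥0∞) (hk : Continuous k)
    (hkX : ∀ f ∈ X, ∫ y, k y * f y ∂μ = f x) {g : Ω → ℝ} (hg : Continuous g)
    (hgX : ∀ f ∈ X, ∫ y, g y * f y ∂μ = f x) :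
    (eLpNorm g q μ).toReal ∈ annihilatorDistances X μ q k := by
  refine ⟨fun y => k y - g y, (hk.sub hg).memLp_of_compactSpace q, fun f hf => ?_, by simp⟩
  have hkf : Integrable (fun y => k y * f y) μ := (hk.mul f.continuous).integrable_of_compactSpace
  have hgf : Integrable (fun y => g y * f y) μ := (hg.mul f.continuous).integrable_of_compactSpace
  simp only [sub_mul]
  rw [integral_sub hkf hgf, hkX f hf, hgX f hf, sub_self]

section Orthonormal

variable {ι : Type*} [Fintype ι] [DecidableEq ι] {u : ι → C(Ω, ℝ)}

lemma integral_mul_sum_smul (hortho : ∀ i j, (∫ y, u i y * u j y ∂μ) = if i = j then 1 else 0)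
    (c : ι → ℝ) (i : ι) : ∫ y, u i y * (∑ j, c j • u j) y ∂μ = c i := by
  have hint : ∀ j, Integrable (fun y => c j * (u i y * u j y)) μ := fun j =>
    ((u i * u j).continuous.integrable_of_compactSpace).const_mul _
  simp only [ContinuousMap.coe_sum, ContinuousMap.coe_smul, Finset.sum_apply, Pi.smul_apply,
    smul_eq_mul, Finset.mul_sum, mul_left_comm (u i _)]
  rw [integral_finsetSum _ fun j _ => hint j]
  simp [integral_const_mul, hortho]

lemma eq_sum_integral_smul_of_mem_span
    (hortho : ∀ i j, (∫ y, u i y * u j y ∂μ) = if i = j then 1 else 0)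
    {f : C(Ω, ℝ)} (hf : f ∈ Submodule.span ℝ (Set.range u)) :
    f = ∑ i, (∫ y, u i y * f y ∂μ) • u i := by
  obtain ⟨c, rfl⟩ := (Submodule.mem_span_range_iff_exists_fun ℝ).1 hf
  simp only [integral_mul_sum_smul hortho]

lemma integral_kernel_mul_of_mem_span
    (hortho : ∀ i j, (∫ y, u i y * u j y ∂μ) = if i = j then 1 else 0)
    (x : Ω) {f : C(Ω, ℝ)} (hf : f ∈ Submodule.span ℝ (Set.range u)) :
    ∫ y, (∑ i, u i x * u i y) * f y ∂μ = f x := by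
  have hint : ∀ i, Integrable (fun y => u i x * (u i y * f y)) μ := fun i =>
    ((u i * f).continuous.integrable_of_compactSpace).const_mul _
  conv_rhs => rw [eq_sum_integral_smul_of_mem_span hortho hf]
  simp only [Finset.sum_mul, mul_assoc]
  rw [integral_finsetSum _ fun i _ => hint i]
  simp [integral_const_mul, mul_comm]

lemma eq_zero_of_mem_span_of_ae_eq_zero
    (hortho : ∀ i j, (∫ y, u i y * u j y ∂μ) = if i = j then 1 else 0)
    {f : C(Ω, ℝ)} (hf : f ∈ Submodule.span ℝ (Set.range u)) (h0 : f =ᵐ[μ] 0) : f = 0 := by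
  rw [eq_sum_integral_smul_of_mem_span hortho hf]
  refine Finset.sum_eq_zero fun i _ => ?_
  rw [integral_eq_zero_of_ae (by filter_upwards [h0] with y hy; simp [hy]), zero_smul]

end Orthonormal

section Variation

variable {p : ℝ}

lemma hasDerivAt_integral_abs_add_smul_rpow (hp : 1 < p) (f h : C(Ω, ℝ)) :
    HasDerivAt (fun t : ℝ => ∫ y, |(f + t • h) y| ^ p ∂μ)
      (p * ∫ y, dualityMap p (f y) * h y ∂μ) 0 := by
  have hcont : ∀ t : ℝ, Continuous fun y => |(f + t • h) y| ^ p := fun t =>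
    (f + t • h).continuous.abs.rpow_const fun _ => Or.inr (by linarith)
  have hbound : ∀ y, ∀ t ∈ Metric.ball (0 : ℝ) 1,
      ‖p * dualityMap p ((f + t • h) y) * h y‖ ≤ p * (‖f‖ + ‖h‖) ^ (p - 1) * ‖h‖ := by
    intro y t ht
    rw [Metric.mem_ball, dist_zero_right, Real.norm_eq_abs] at ht
    have hfth : |(f + t • h) y| ≤ ‖f‖ + ‖h‖ :=
      calc |(f + t • h) y| ≤ ‖f + t • h‖ := (f + t • h).norm_coe_le_norm y
        _ ≤ ‖f‖ + |t| * ‖h‖ := by simpa [norm_smul] using norm_add_le f (t • h)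
        _ ≤ ‖f‖ + ‖h‖ := by gcongr; exact mul_le_of_le_one_left (norm_nonneg h) ht.le
    rw [norm_mul, norm_mul, Real.norm_eq_abs, abs_of_pos (zero_lt_one.trans hp),
      Real.norm_eq_abs, abs_dualityMap hp]
    gcongr
    exact h.norm_coe_le_norm y
  have key := hasDerivAt_integral_of_dominated_loc_of_deriv_le (μ := μ) (x₀ := 0)
    (F := fun t y => |(f + t • h) y| ^ p)
    (F' := fun t y => p * dualityMap p ((f + t • h) y) * h y)
    (Metric.ball_mem_nhds 0 one_pos)
    (Eventually.of_forall fun t => (hcont t).aestronglyMeasurable)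
    ((hcont 0).integrable_of_compactSpace)
    ((continuous_const.mul ((continuous_dualityMap hp).comp (f + (0 : ℝ) • h).continuous)).mul
      h.continuous).aestronglyMeasurable
    (Eventually.of_forall hbound) (integrable_const _)
    (Eventually.of_forall fun y t _ => by
      simpa [Function.comp_def] using (hasDerivAt_abs_rpow_eq_dualityMap hp _).comp t
        (((hasDerivAt_id t).mul_const (h y)).const_add (f y)))
  simpa [mul_assoc, integral_const_mul] using key.2

lemma hasDerivAt_eLpNorm_add_smul (hp : 1 < p) {f : C(Ω, ℝ)}
    (hf : (eLpNorm f (ENNReal.ofReal p) μ).toReal = 1) (h : C(Ω, ℝ)) :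
    HasDerivAt (fun t : ℝ => (eLpNorm ⇑(f + t • h) (ENNReal.ofReal p) μ).toReal)
      (∫ y, dualityMap p (f y) * h y ∂μ) 0 := by
  have hp0 : 0 < p := zero_lt_one.trans hp
  have hG0 : ∫ y, |(f + (0 : ℝ) • h) y| ^ p ∂μ = 1 := by
    rw [zero_smul, add_zero, ← Real.rpow_inv_rpow (integral_nonneg fun y => by positivity)
      hp0.ne', ← eLpNorm_toReal_eq_integral_rpow hp0, hf, Real.one_rpow]
  have hN := (hasDerivAt_integral_abs_add_smul_rpow (μ := μ) hp f h).rpow_const (p := p⁻¹)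
    (.inl (by rw [hG0]; exact one_ne_zero))
  rw [hG0, Real.one_rpow, mul_one, mul_comm, ← mul_assoc, inv_mul_cancel₀ hp0.ne', one_mul] at hN
  simpa only [eLpNorm_toReal_eq_integral_rpow hp0] using hN

-- The Lagrange condition: `t ↦ L ‖f + t h‖_p - (L + t B)` is minimal at `t = 0`.
lemma eq_mul_integral_dualityMap_mul_of_forall_le (hp : 1 < p) {f : C(Ω, ℝ)}
    (hf : (eLpNorm f (ENNReal.ofReal p) μ).toReal = 1) (h : C(Ω, ℝ)) {L B : ℝ}
    (hle : ∀ t : ℝ, L + t * B ≤ L * (eLpNorm ⇑(f + t • h) (ENNReal.ofReal p) μ).toReal) :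
    B = L * ∫ y, dualityMap p (f y) * h y ∂μ := by
  have hderiv := ((hasDerivAt_eLpNorm_add_smul hp hf h).const_mul L).sub
    (((hasDerivAt_id (0 : ℝ)).mul_const B).const_add L)
  have hmin : IsLocalMin ((fun t : ℝ => L * (eLpNorm ⇑(f + t • h) (ENNReal.ofReal p) μ).toReal) -
      fun t => L + id t * B) 0 :=
    Eventually.of_forall fun t => by simpa [hf] using hle t
  linarith [hmin.hasDerivAt_eq_zero hderiv]

end Variation

section Extremal

variable (X : Submodule ℝ C(Ω, ℝ)) [FiniteDimensional ℝ X]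

lemma exists_norm_le_mul_eLpNorm (hX : ∀ f ∈ X, f =ᵐ[μ] 0 → f = 0)
    {p : ℝ≥0∞} (hp : 1 ≤ p) : ∃ K : ℝ, 0 < K ∧ ∀ f ∈ X, ‖f‖ ≤ K * (eLpNorm f p μ).toReal := by
  have : Fact (1 ≤ p) := ⟨hp⟩
  let T : X →ₗ[ℝ] Lp ℝ p μ := (ContinuousMap.toLp p μ ℝ).toLinearMap.comp X.subtype
  have hinj : Function.Injective T := by
    refine (injective_iff_map_eq_zero T).2 fun f hf => Subtype.ext (hX f f.2 ?_)
    exact (ContinuousMap.coeFn_toLp μ (f : C(Ω, ℝ))).symm.trans (Lp.eq_zero_iff_ae_eq_zero.1 hf)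
  obtain ⟨K, hK0, hK⟩ :=
    (LinearMap.injective_iff_antilipschitz (𝕜 := ℝ) (E := X) (F := Lp ℝ p μ) T).1 hinj
  refine ⟨K, hK0, fun f hf => ?_⟩
  simpa [T, ContinuousMap.norm_toLp] using hK.le_mul_norm (map_zero T) ⟨f, hf⟩

lemma exists_isPointwiseExtremal (hX : ∀ f ∈ X, f =ᵐ[μ] 0 → f = 0)
    {p : ℝ≥0∞} (hp : 1 ≤ p) (x : Ω) : ∃ f₀, IsPointwiseExtremal X μ p x f₀ := by
  have : Fact (1 ≤ p) := ⟨hp⟩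
  obtain ⟨K, hK0, hK⟩ := exists_norm_le_mul_eLpNorm X hX hp
  let B : Set X := {f | ‖ContinuousMap.toLp p μ ℝ (f : C(Ω, ℝ))‖ ≤ 1}
  have hB : IsCompact B := by
    refine (isCompact_closedBall (0 : X) K).of_isClosed_subset
      (isClosed_le ((ContinuousMap.toLp p μ ℝ).continuous.comp continuous_subtype_val).norm
        continuous_const) fun f hf => ?_
    rw [Metric.mem_closedBall, dist_zero_right]
    have hf1 : (eLpNorm (f : C(Ω, ℝ)) p μ).toReal ≤ 1 := by
      simpa [B, ContinuousMap.norm_toLp] using hf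
    simpa using (hK f f.2).trans (mul_le_of_le_one_right hK0.le hf1)
  obtain ⟨⟨f₀, hf₀X⟩, hf₀B, hmax⟩ := hB.exists_isMaxOn ⟨0, by simp [B]⟩
    ((continuous_eval_const x).comp continuous_subtype_val).continuousOn
  have hle : ∀ g ∈ X, (eLpNorm g p μ).toReal ≤ 1 → g x ≤ f₀ x := fun g hg hg1 =>
    hmax (a := ⟨g, hg⟩) (by simpa [B, ContinuousMap.norm_toLp] using hg1)
  refine ⟨f₀, hf₀X, by simpa [B, ContinuousMap.norm_toLp] using hf₀B, fun f hf => ?_⟩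
  obtain hn | hn := (ENNReal.toReal_nonneg (a := eLpNorm f p μ)).eq_or_lt
  · obtain rfl : f = 0 := norm_le_zero_iff.1 (by simpa [← hn] using hK f hf)
    simp
  exact abs_apply_le_mul_eLpNorm_of_forall_apply_le hle hf hn

end Extremal

namespace IsPointwiseExtremal

variable {X : Submodule ℝ C(Ω, ℝ)} {x : Ω} {k : Ω → ℝ} {f₀ : C(Ω, ℝ)}

lemma integral_dualExtremal_mul {p : ℝ} (hf₀ : IsPointwiseExtremal X μ (ENNReal.ofReal p) x f₀)
    (hp : 1 < p) {h : C(Ω, ℝ)} (hh : h ∈ X) : ∫ y, dualExtremal p x f₀ y * h y ∂μ = h x := by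
  simp only [dualExtremal, mul_assoc]
  rw [integral_const_mul]
  rcases hf₀.apply_nonneg.eq_or_lt with h0 | hpos
  · have := hf₀.abs_apply_le h hh
    rw [← h0, zero_mul] at this ⊢
    exact (abs_nonpos_iff.1 this).symm
  · refine (eq_mul_integral_dualityMap_mul_of_forall_le hp (hf₀.eLpNorm_eq_one hpos) h
      fun t => ?_).symm
    have := hf₀.abs_apply_le (f₀ + t • h) (X.add_mem hf₀.mem (X.smul_mem t hh))
    simpa using (le_abs_self _).trans this

lemma le_csInf_annihilatorDistances {p q : ℝ≥0∞} [p.HolderConjugate q]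
    (hf₀ : IsPointwiseExtremal X μ p x f₀) (hk : Continuous k)
    (hkX : ∀ f ∈ X, ∫ y, k y * f y ∂μ = f x) : f₀ x ≤ sInf (annihilatorDistances X μ q k) := by
  refine le_csInf ⟨_, eLpNorm_mem_annihilatorDistances q hk hkX hk hkX⟩ ?_
  rintro _ ⟨v, hv, hvX, rfl⟩
  have hf₀p : MemLp f₀ p μ := f₀.continuous.memLp_of_compactSpace p
  have hkf : Integrable (fun y => k y * f₀ y) μ :=
    (hk.mul f₀.continuous).integrable_of_compactSpace
  have hvf : Integrable (fun y => v y * f₀ y) μ := hv.integrable_mul hf₀p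
  have hrep : f₀ x = ∫ y, (k y - v y) * f₀ y ∂μ := by
    simp only [sub_mul]
    rw [integral_sub hkf hvf, hkX f₀ hf₀.mem, hvX f₀ hf₀.mem, sub_zero]
  calc f₀ x ≤ |∫ y, (k y - v y) * f₀ y ∂μ| := hrep ▸ le_abs_self _
    _ ≤ (eLpNorm (fun y => k y - v y) q μ).toReal * (eLpNorm f₀ p μ).toReal :=
      abs_integral_mul_le_eLpNorm_mul_eLpNorm ((hk.memLp_of_compactSpace q).sub hv) hf₀p
    _ ≤ _ := mul_le_of_le_one_right ENNReal.toReal_nonneg hf₀.eLpNorm_le_one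

lemma csInf_annihilatorDistances_le {p : ℝ} (hp : 1 < p)
    (hf₀ : IsPointwiseExtremal X μ (ENNReal.ofReal p) x f₀) (hk : Continuous k)
    (hkX : ∀ f ∈ X, ∫ y, k y * f y ∂μ = f x) :
    sInf (annihilatorDistances X μ (ENNReal.ofReal p / (ENNReal.ofReal p - 1)) k) ≤ f₀ x :=
  (csInf_le (bddBelow_annihilatorDistances _ _ _) (eLpNorm_mem_annihilatorDistances _ hk hkX
    (continuous_dualExtremal hp x f₀) fun _ => hf₀.integral_dualExtremal_mul hp)).trans
    (hf₀.eLpNorm_dualExtremal_le hp)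

end IsPointwiseExtremal

end

section

variable {Ω : Type*} [TopologicalSpace Ω] [CompactSpace Ω] [MeasurableSpace Ω] [BorelSpace Ω]
  {μ : Measure Ω} [IsProbabilityMeasure μ]

lemma IsPointwiseExtremal.csInf_annihilatorDistances_top_le {X : Submodule ℝ C(Ω, ℝ)} {x : Ω}
    {k : Ω → ℝ} {f₀ : C(Ω, ℝ)} [FiniteDimensional ℝ X]
    (hX : ∀ f ∈ X, f =ᵐ[μ] 0 → f = 0) (hf₀ : IsPointwiseExtremal X μ 1 x f₀) (hk : Continuous k)
    (hkX : ∀ f ∈ X, ∫ y, k y * f y ∂μ = f x) :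
    sInf (annihilatorDistances X μ ∞ k) ≤ f₀ x := by
  obtain ⟨K, hK0, hK⟩ := exists_norm_le_mul_eLpNorm X hX le_rfl
  -- For `r > 1` the extremal `f` for `L_r` has `‖f‖_1 ≤ ‖f‖_r ≤ 1`,
  -- hence `f x ≤ f₀ x` and `‖f‖ ≤ K`.
  have hbound : ∀ r : ℝ, 1 < r → sInf (annihilatorDistances X μ ∞ k) ≤ f₀ x * K ^ (r - 1) := by
    intro r hr
    obtain ⟨f, hf⟩ := exists_isPointwiseExtremal X hX (ENNReal.one_le_ofReal.2 hr.le) x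
    have hf1 : (eLpNorm f 1 μ).toReal ≤ 1 :=
      (ENNReal.toReal_mono (f.continuous.memLp_of_compactSpace _).eLpNorm_ne_top
        (eLpNorm_le_eLpNorm_of_exponent_le (ENNReal.one_le_ofReal.2 hr.le)
          f.continuous.aestronglyMeasurable)).trans hf.eLpNorm_le_one
    have hfx : f x ≤ f₀ x := (le_abs_self _).trans ((hf₀.abs_apply_le f hf.mem).trans
      (mul_le_of_le_one_right hf₀.apply_nonneg hf1))
    have hfK : ‖f‖ ≤ K := (hK f hf.mem).trans (mul_le_of_le_one_right hK0.le hf1)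
    calc sInf (annihilatorDistances X μ ∞ k) ≤ (eLpNorm (dualExtremal r x f) ∞ μ).toReal :=
          csInf_le (bddBelow_annihilatorDistances _ _ _) (eLpNorm_mem_annihilatorDistances _ hk hkX
            (continuous_dualExtremal hr x f) fun _ => hf.integral_dualExtremal_mul hr)
      _ ≤ f x * ‖f‖ ^ (r - 1) := eLpNorm_top_dualExtremal_le hr hf.apply_nonneg
      _ ≤ f₀ x * K ^ (r - 1) := by
        gcongr
        exact hf₀.apply_nonneg
  have hlim : Tendsto (fun r : ℝ => f₀ x * K ^ (r - 1)) (𝓝[>] 1) (𝓝 (f₀ x)) := by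
    have : ContinuousAt (fun r : ℝ => f₀ x * K ^ (r - 1)) 1 := continuousAt_const.mul
      ((Real.continuousAt_const_rpow hK0.ne').comp (f := fun r : ℝ => r - 1) (by fun_prop))
    simpa using this.tendsto.mono_left nhdsWithin_le_nhds
  exact ge_of_tendsto hlim (eventually_nhdsWithin_of_forall fun r hr => hbound r hr)

end

/-- Pointwise Nikol'skii duality: for an `N`-dimensional subspace
`X_N ⊆ C(Ω)` with `L_2(μ)`-orthonormal basis `u` and reproducing kernel
`D_N(x,y) = ∑ u_i(x)u_i(y)`, and `1 ≤ p < ∞` with conjugate `p' = p/(p-1)`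
(as an `ℝ≥0∞`, so `p' = ∞` when `p = 1`), for every `x ∈ Ω`:
`sup {|f(x)| : f ∈ X_N, ‖f‖_p ≤ 1} = inf {‖D_N(x,·) - v‖_{p'} : v ∈ L_{p'}, v ⊥ X_N}`. -/
theorem stmt13 (Ω : Type) [TopologicalSpace Ω] [CompactSpace Ω]
    [MeasurableSpace Ω] [BorelSpace Ω]
    (μ : Measure Ω) [IsProbabilityMeasure μ]
    (N : ℕ) (u : Fin N → C(Ω, ℝ))
    (XN : Submodule ℝ C(Ω, ℝ)) (hXN : XN = Submodule.span ℝ (Set.range u))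
    (hortho : ∀ i j, (∫ x, u i x * u j x ∂μ) = if i = j then (1 : ℝ) else 0)
    (p : ℝ) (hp1 : 1 ≤ p) (x : Ω) :
    sSup {r : ℝ | ∃ f : C(Ω, ℝ), f ∈ XN ∧
        (eLpNorm (fun y => f y) (ENNReal.ofReal p) μ).toReal ≤ 1 ∧ r = |f x|}
      = sInf {s : ℝ | ∃ v : Ω → ℝ,
          MemLp v (ENNReal.ofReal p / (ENNReal.ofReal p - 1)) μ ∧
          (∀ f : C(Ω, ℝ), f ∈ XN → (∫ y, v y * f y ∂μ) = 0) ∧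
          s = (eLpNorm (fun y => (∑ i, u i x * u i y) - v y)
                (ENNReal.ofReal p / (ENNReal.ofReal p - 1)) μ).toReal} := by
  subst hXN
  have : FiniteDimensional ℝ (Submodule.span ℝ (Set.range u)) :=
    .span_of_finite ℝ (Set.finite_range u)
  have hX := fun f (hf : f ∈ Submodule.span ℝ (Set.range u)) =>
    eq_zero_of_mem_span_of_ae_eq_zero hortho hf
  have hkX := fun f (hf : f ∈ Submodule.span ℝ (Set.range u)) =>
    integral_kernel_mul_of_mem_span hortho x hf
  have hk : Continuous fun y => ∑ i, u i x * u i y := by fun_prop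
  have : (ENNReal.ofReal p).HolderConjugate (ENNReal.ofReal p / (ENNReal.ofReal p - 1)) :=
    ENNReal.holderConjugate_div_sub_one (ENNReal.one_le_ofReal.2 hp1) ENNReal.ofReal_ne_top
  obtain ⟨f₀, hf₀⟩ := exists_isPointwiseExtremal _ hX (ENNReal.one_le_ofReal.2 hp1) x
  rw [hf₀.isGreatest.csSup_eq]
  refine le_antisymm (hf₀.le_csInf_annihilatorDistances hk hkX) ?_
  rcases hp1.eq_or_lt with rfl | hp
  · have hq : ENNReal.ofReal 1 / (ENNReal.ofReal 1 - 1) = ∞ := by simp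
    rw [ENNReal.ofReal_one] at hf₀
    rw [hq]
    exact hf₀.csInf_annihilatorDistances_top_le hX hk hkX
  · exact hf₀.csInf_annihilatorDistances_le hp hk hkX
end
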